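/- arXiv:1603.05182 — 3 statements merged into one kernel-verified Lean document; each statement's English description precedes it below -/
import Mathlib

section
/- For every pattern s : I → ZMod 2 the product of gauge constraints satisfies C^s = X(s) ⊗ X_g(∂s); in particular, for every closed pattern s ∈ S the product of the local gauge constraints over the support of s reconstructs the global symmetry operator: C^s = X(s) ⊗ 1 on H_m ⊗ H_g. -/
set_option linter.unusedSectionVars false

noncomputable section

namespace GaugingFractal

/-- The sign `(-1)^t` attached to a `ZMod 2` exponent. -/
def sgn (t : ZMod 2) : ℂ := (-1 : ℂ) ^ t.val

lemma sgn_mul_self (t : ZMod 2) : sgn t * sgn t = 1 := by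
  unfold sgn
  rw [← pow_add, ← two_mul, pow_mul]
  norm_num

lemma zmodfun_add_self {K : Type*} (k : K → ZMod 2) : k + k = 0 := by
  funext j
  exact CharTwo.add_self_eq_zero _

/-- Hilbert space of qubits labelled by a finite set `K`; the computational basis
vector `e_a` is indexed by a pattern `a : K → ZMod 2`. -/
abbrev HS (K : Type*) := EuclideanSpace ℂ (K → ZMod 2)

section Single
variable {K : Type*} [Fintype K] [DecidableEq K]

/-- Pauli X operator: `X(p) e_a = e_{a+p}`. -/
def XOp (p : K → ZMod 2) : HS K →ₗ[ℂ] HS K where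
  toFun ψ := WithLp.toLp 2 (fun a => ψ (a + p))
  map_add' _ _ := rfl
  map_smul' _ _ := rfl

/-- Pauli Z operator: `Z(p) e_a = (-1)^{Σ_i p i * a i} e_a`. -/
def ZOp (p : K → ZMod 2) : HS K →ₗ[ℂ] HS K where
  toFun ψ := WithLp.toLp 2 (fun a => sgn (∑ i, p i * a i) * ψ a)
  map_add' ψ φ := by
    ext a
    exact mul_add _ _ _
  map_smul' c ψ := by
    ext a
    simp only [RingHom.id_apply, PiLp.smul_apply, PiLp.toLp_apply, smul_eq_mul]
    ring

end Single

section Pair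

variable {I J : Type*} [Fintype I] [DecidableEq I] [Fintype J] [DecidableEq J]

/-- Hilbert space of the matter qubits (labelled by `I`) tensored with the gauge
qubits (labelled by `J`): the computational basis vector indexed by `(a, b)`
realizes the tensor product `e_a ⊗ f_b`. -/
abbrev HS2 (I J : Type*) := EuclideanSpace ℂ ((I → ZMod 2) × (J → ZMod 2))

/-- `X(p) ⊗ X_g(q)` on `H_m ⊗ H_g`. -/
def XXOp (p : I → ZMod 2) (q : J → ZMod 2) : HS2 I J →ₗ[ℂ] HS2 I J where
  toFun ψ := WithLp.toLp 2 (fun ab => ψ (ab.1 + p, ab.2 + q))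
  map_add' _ _ := rfl
  map_smul' _ _ := rfl

/-- `X(p) ⊗ Z_g(q)` on `H_m ⊗ H_g`. -/
def XZOp (p : I → ZMod 2) (q : J → ZMod 2) : HS2 I J →ₗ[ℂ] HS2 I J where
  toFun ψ := WithLp.toLp 2 (fun ab => sgn (∑ j, q j * ab.2 j) * ψ (ab.1 + p, ab.2))
  map_add' ψ φ := by
    ext ab
    exact mul_add _ _ _
  map_smul' c ψ := by
    ext ab
    simp only [RingHom.id_apply, PiLp.smul_apply, PiLp.toLp_apply, smul_eq_mul]
    ring

/-- `Z(p) ⊗ X_g(q)` on `H_m ⊗ H_g`. -/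
def ZXOp (p : I → ZMod 2) (q : J → ZMod 2) : HS2 I J →ₗ[ℂ] HS2 I J where
  toFun ψ := WithLp.toLp 2 (fun ab => sgn (∑ i, p i * ab.1 i) * ψ (ab.1, ab.2 + q))
  map_add' ψ φ := by
    ext ab
    exact mul_add _ _ _
  map_smul' c ψ := by
    ext ab
    simp only [RingHom.id_apply, PiLp.smul_apply, PiLp.toLp_apply, smul_eq_mul]
    ring

/-- The flux operator `1 ⊗ Z_g(k)` on `H_m ⊗ H_g`. -/
def IZOp (k : J → ZMod 2) : HS2 I J →ₗ[ℂ] HS2 I J := XZOp 0 k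

variable (A : J → Finset I)

/-- The boundary map `∂ : (I → ZMod 2) → (J → ZMod 2)`, `(∂p)(j) = Σ_{i ∈ A j} p(i)`. -/
def bnd (p : I → ZMod 2) : J → ZMod 2 := fun j => ∑ i ∈ A j, p i

/-- The coboundary map `δ : (J → ZMod 2) → (I → ZMod 2)`, `(δk)(i) = Σ_{j : i ∈ A j} k(j)`. -/
def cobnd (k : J → ZMod 2) : I → ZMod 2 :=
  fun i => ∑ j ∈ Finset.univ.filter (fun j => i ∈ A j), k j

/-- The indicator pattern `χ_i` of a matter qubit `i`. -/
def chi (i : I) : I → ZMod 2 := Pi.single i 1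

/-- The indicator pattern `κ_j` of a gauge qubit `j`. -/
def kap (j : J) : J → ZMod 2 := Pi.single j 1

/-- The local gauge constraint `C_i = X(χ_i) ⊗ X_g(∂χ_i)`. -/
def C (i : I) : HS2 I J →ₗ[ℂ] HS2 I J := XXOp (chi i) (bnd A (chi i))

lemma XXOp_mul (p p' : I → ZMod 2) (q q' : J → ZMod 2) :
    (XXOp p q : Module.End ℂ (HS2 I J)) * XXOp p' q' = XXOp (p + p') (q + q') := by
  apply LinearMap.ext
  intro ψ
  ext ab
  show ψ (ab.1 + p + p', ab.2 + q + q') = ψ (ab.1 + (p + p'), ab.2 + (q + q'))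
  rw [add_assoc, add_assoc]

lemma C_commute (i i' : I) : Commute (C A i) (C A i') := by
  show C A i * C A i' = C A i' * C A i
  unfold C
  rw [XXOp_mul, XXOp_mul, add_comm (chi i) (chi i'),
    add_comm (bnd A (chi i)) (bnd A (chi i'))]

/-- The product of gauge constraints `C^s = Π_{i : s i = 1} C_i`. -/
def Cprod (s : I → ZMod 2) : Module.End ℂ (HS2 I J) :=
  (Finset.univ.filter fun i => s i = 1).noncommProd (fun i => C A i)
    (fun i _ j _ _ => C_commute A i j)

lemma Chalf_commute (i i' : I) :
    Commute ((2 : ℂ)⁻¹ • (1 + C A i)) ((2 : ℂ)⁻¹ • (1 + C A i')) := by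
  have h : Commute (1 + C A i) (1 + C A i') :=
    (Commute.one_left _).add_left ((Commute.one_right _).add_right (C_commute A i i'))
  exact (h.smul_left _).smul_right _

/-- The projector `P = Π_{i ∈ I} (1 + C_i)/2` onto the gauge invariant subspace. -/
def Pproj : Module.End ℂ (HS2 I J) :=
  Finset.univ.noncommProd (fun i => (2 : ℂ)⁻¹ • (1 + C A i))
    (fun i _ j _ _ => Chalf_commute A i j)

/-- `ψ ↦ ψ ⊗ f_0`, the inclusion `1_m ⊗ |f_0⟩ : H_m → H_m ⊗ H_g` determined by the
all-zeros gauge basis vector `f_0`. -/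
def incl : HS I →ₗ[ℂ] HS2 I J where
  toFun ψ := WithLp.toLp 2 (fun ab => if ab.2 = 0 then ψ ab.1 else 0)
  map_add' ψ φ := by
    ext ab
    by_cases h : ab.2 = 0 <;> simp [h]
  map_smul' c ψ := by
    ext ab
    by_cases h : ab.2 = 0 <;> simp [h]

/-- The compression `1_m ⊗ ⟨f_0| : H_m ⊗ H_g → H_m`. -/
def res0 : HS2 I J →ₗ[ℂ] HS I where
  toFun ψ := WithLp.toLp 2 (fun a => ψ (a, 0))
  map_add' _ _ := rfl
  map_smul' _ _ := rfl

/-- The state gauging map `G ψ = P (ψ ⊗ f_0)`. -/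
def Gmap : HS I →ₗ[ℂ] HS2 I J := Pproj A ∘ₗ incl

/-- The operator gauging map `𝒢[O] = Σ_{s : I → ZMod 2} C^s (O ⊗ |f_0⟩⟨f_0|) C^s`,
where `O ⊗ |f_0⟩⟨f_0| = incl ∘ O ∘ res0`. -/
def gaugeOp (O : Module.End ℂ (HS I)) : Module.End ℂ (HS2 I J) :=
  ∑ s : I → ZMod 2, Cprod A s * (incl ∘ₗ O ∘ₗ res0) * Cprod A s

/-- The joint fixed subspace `{v | C_i v = v for all i}` of the gauge constraints. -/
def fixedSub : Submodule ℂ (HS2 I J) where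
  carrier := {v | ∀ i, C A i v = v}
  add_mem' := by
    intro x y hx hy i
    rw [map_add, hx i, hy i]
  zero_mem' := by
    intro i
    simp
  smul_mem' := by
    intro c x hx i
    rw [map_smul, hx i]

/-- The symmetric subspace `{ψ | X(s) ψ = ψ for all s with ∂s = 0}` of the matter space. -/
def symmSub : Submodule ℂ (HS I) where
  carrier := {ψ | ∀ s, bnd A s = 0 → XOp s ψ = ψ}
  add_mem' := by
    intro x y hx hy s hs
    rw [map_add, hx s hs, hy s hs]
  zero_mem' := by
    intro s hs
    simp
  smul_mem' := by
    intro c x hx s hs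
    rw [map_smul, hx s hs]

/-- The cluster stabilizer `K_i = X(χ_i) ⊗ Z_g(∂χ_i)`. -/
def Kst (i : I) : Module.End ℂ (HS2 I J) := XZOp (chi i) (bnd A (chi i))

/-- The cluster stabilizer `L_j = Z(δκ_j) ⊗ X_g(κ_j)`. -/
def Lst (j : J) : Module.End ℂ (HS2 I J) := ZXOp (cobnd A (kap j)) (kap j)

/-- The disentangling circuit of controlled-X gates from each matter qubit to its
adjacent gauge qubits: `V (e_a ⊗ f_b) = e_a ⊗ f_{b + ∂a}`. -/
def Vequiv : HS2 I J ≃ₗ[ℂ] HS2 I J where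
  toFun ψ := WithLp.toLp 2 (fun ab => ψ (ab.1, ab.2 + bnd A ab.1))
  invFun ψ := WithLp.toLp 2 (fun ab => ψ (ab.1, ab.2 + bnd A ab.1))
  map_add' _ _ := rfl
  map_smul' _ _ := rfl
  left_inv ψ := by
    ext ab
    show ψ (ab.1, ab.2 + bnd A ab.1 + bnd A ab.1) = ψ ab
    rw [add_assoc, zmodfun_add_self, add_zero]
  right_inv ψ := by
    ext ab
    show ψ (ab.1, ab.2 + bnd A ab.1 + bnd A ab.1) = ψ ab
    rw [add_assoc, zmodfun_add_self, add_zero]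

/-- The circuit of controlled-Z gates along the edges of the bipartite graph:
`U (e_a ⊗ f_b) = (-1)^{Σ_j (∂a)(j)·b(j)} e_a ⊗ f_b`. -/
def Uequiv : HS2 I J ≃ₗ[ℂ] HS2 I J where
  toFun ψ := WithLp.toLp 2 (fun ab => sgn (∑ j, bnd A ab.1 j * ab.2 j) * ψ ab)
  invFun ψ := WithLp.toLp 2 (fun ab => sgn (∑ j, bnd A ab.1 j * ab.2 j) * ψ ab)
  map_add' ψ φ := by
    ext ab
    exact mul_add _ _ _
  map_smul' c ψ := by
    ext ab
    simp only [RingHom.id_apply, PiLp.smul_apply, PiLp.toLp_apply, smul_eq_mul]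
    ring
  left_inv ψ := by
    ext ab
    show sgn _ * (sgn _ * ψ ab) = ψ ab
    rw [← mul_assoc, sgn_mul_self, one_mul]
  right_inv ψ := by
    ext ab
    show sgn _ * (sgn _ * ψ ab) = ψ ab
    rw [← mul_assoc, sgn_mul_self, one_mul]

lemma XXOp_zero : XXOp (0 : I → ZMod 2) (0 : J → ZMod 2) = 1 := by
  apply LinearMap.ext
  intro ψ
  ext ab
  show ψ (ab.1 + 0, ab.2 + 0) = ψ ab
  rw [add_zero, add_zero]

lemma noncommProd_XXOp {ι : Type*} (T : Finset ι) (p : ι → I → ZMod 2) (q : ι → J → ZMod 2)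
    (comm : (T : Set ι).Pairwise
      (Function.onFun Commute fun t => (XXOp (p t) (q t) : Module.End ℂ (HS2 I J)))) :
    T.noncommProd (fun t => XXOp (p t) (q t)) comm = XXOp (∑ t ∈ T, p t) (∑ t ∈ T, q t) := by
  induction T using Finset.cons_induction with
  | empty => rw [Finset.noncommProd_empty, Finset.sum_empty, Finset.sum_empty, XXOp_zero]
  | cons a T ha ih =>
    rw [Finset.noncommProd_cons, ih, Finset.sum_cons, Finset.sum_cons, XXOp_mul]

lemma bnd_sum {ι : Type*} (T : Finset ι) (p : ι → I → ZMod 2) :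
    bnd A (∑ t ∈ T, p t) = ∑ t ∈ T, bnd A (p t) := by
  funext j
  simp only [bnd, Finset.sum_apply]
  exact Finset.sum_comm

lemma sum_filter_chi (s : I → ZMod 2) :
    ∑ i ∈ Finset.univ.filter (fun i => s i = 1), chi i = s := by
  rw [Finset.sum_filter]
  conv_rhs => rw [← Finset.univ_sum_single s]
  refine Finset.sum_congr rfl fun i _ => ?_
  rcases (by decide : ∀ t : ZMod 2, t = 0 ∨ t = 1) (s i) with h | h <;> simp [h, chi]

lemma Cprod_eq_XXOp (s : I → ZMod 2) : Cprod A s = XXOp s (bnd A s) := by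
  have h := noncommProd_XXOp (Finset.univ.filter fun i => s i = 1) chi (fun i => bnd A (chi i))
    (fun i _ j _ _ => C_commute A i j)
  -- `h` is about `Cprod A s` because `C A i` unfolds to `XXOp (chi i) (bnd A (chi i))`.
  rwa [← bnd_sum, sum_filter_chi] at h

/-- For every pattern `s`, the product of gauge constraints satisfies
`C^s = X(s) ⊗ X_g(∂s)`; in particular for every closed pattern (`∂s = 0`) it reconstructs
the global symmetry operator `X(s) ⊗ 1`. -/
theorem Cprod_eq_symmetry (A : J → Finset I) :
    (∀ s : I → ZMod 2, Cprod A s = XXOp s (bnd A s))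
    ∧ (∀ s : I → ZMod 2, bnd A s = 0 → Cprod A s = XXOp s (0 : J → ZMod 2)) :=
  ⟨Cprod_eq_XXOp A, fun s hs => hs ▸ Cprod_eq_XXOp A s⟩

end Pair

end GaugingFractal
end
end

section
/- The operator G†G equals the group average over the symmetry group: G†G = 2^{−|I|} Σ_{s ∈ S} X(s); consequently G†G = (|S| / 2^{|I|}) · Π, where Π is the orthogonal projection of H_m onto the symmetric subspace {ψ ∈ H_m : X(s)ψ = ψ for all s ∈ S}, |I| is the cardinality of I and |S| the cardinality of S. -/
set_option linter.unusedSectionVars false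

noncomputable section

/-! The constraints `C_i` are the images of the generators of `(ZMod 2)^I` under the
translation representation `s ↦ X(s) ⊗ X_g(∂s)`, so expanding `P = Π_i (1 + C_i)/2` in the
group algebra shows that `P` is the group average of that representation. A group average of a
unitary representation is the orthogonal projection onto its invariants; hence `P` is a
self-adjoint idempotent and `G†G = ⟨f_0| P |f_0⟩ = 2^{-|I|} Σ_s ⟨f_0| X(s) ⊗ X_g(∂s) |f_0⟩`,
where only the terms with `∂s = 0` survive. What is left is `|S| / 2^{|I|}` times the average of
the representation `s ↦ X(s)` of `S`, i.e. times the orthogonal projection onto the symmetric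
subspace. -/

open Finset MonoidAlgebra

theorem MonoidAlgebra.prod_one_add_basis_eq_sum (k : Type*) [CommSemiring k] {ι : Type*}
    [Fintype ι] [DecidableEq ι] :
    ∏ i, (1 + of k _ (Multiplicative.ofAdd (Pi.single i 1 : ι → ZMod 2)))
      = ∑ g : Multiplicative (ι → ZMod 2), of k _ g := by
  have h (i : ι) : 1 + of k _ (Multiplicative.ofAdd (Pi.single i 1 : ι → ZMod 2))
      = ∑ x : ZMod 2, of k _ (Multiplicative.ofAdd (Pi.single i x : ι → ZMod 2)) := by
    rw [show (univ : Finset (ZMod 2)) = {0, 1} by decide, sum_pair zero_ne_one, Pi.single_zero,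
      ofAdd_zero, map_one]
  simp_rw [h, Finset.prod_univ_sum, Fintype.piFinset_univ, ← map_prod, ← ofAdd_sum,
    Finset.univ_sum_single]
  exact Fintype.sum_equiv Multiplicative.ofAdd _ _ fun _ => rfl

namespace Representation

theorem noncommProd_half_one_add_eq_smul_sum {k V ι : Type*} [Field k]
    [AddCommGroup V] [Module k V] [Fintype ι] [DecidableEq ι]
    (ρ : Representation k (Multiplicative (ι → ZMod 2)) V) (comm) :
    univ.noncommProd (fun i => (2 : k)⁻¹ • (1 + ρ (Multiplicative.ofAdd (Pi.single i 1)))) comm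
      = ((2 : k) ^ Fintype.card ι)⁻¹ • ∑ g, ρ g := by
  have hρ (i : ι) : (2 : k)⁻¹ • (1 + ρ (Multiplicative.ofAdd (Pi.single i 1)))
      = ρ.asAlgebraHom ((2 : k)⁻¹ • (1 + of k _ (Multiplicative.ofAdd (Pi.single i 1)))) := by
    rw [map_smul, map_add, map_one, asAlgebraHom_of]
  simp_rw [hρ]
  rw [← map_noncommProd _ _ fun _ _ _ _ _ => Commute.all _ _, noncommProd_eq_prod, ← smul_prod,
    prod_one_add_basis_eq_sum, map_smul, map_sum, card_univ, inv_pow]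
  simp_rw [asAlgebraHom_of]

theorem averageMap_eq_smul_sum {k G V : Type*} [CommRing k] [Group G] [Fintype G]
    [Invertible (Fintype.card G : k)] [AddCommGroup V] [Module k V] (ρ : Representation k G V) :
    ρ.averageMap = ⅟(Fintype.card G : k) • ∑ g, ρ g := by
  simp [GroupAlgebra.average, map_sum]

section Unitary

variable {𝕜 G E : Type*} [RCLike 𝕜] [Group G] [Fintype G] [Invertible (Fintype.card G : 𝕜)]
  [NormedAddCommGroup E] [InnerProductSpace 𝕜 E]

theorem isSymmetricProjection_averageMap (ρ : Representation 𝕜 G E)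
    (hρ : ∀ g x y, inner 𝕜 (ρ g x) y = inner 𝕜 x (ρ g⁻¹ y)) :
    ρ.averageMap.IsSymmetricProjection := by
  refine ⟨ρ.isProj_averageMap.isIdempotentElem, fun x y => ?_⟩
  have hc : (starRingEnd 𝕜) ⅟(Fintype.card G : 𝕜) = ⅟(Fintype.card G : 𝕜) := by
    rw [invOf_eq_inv, map_inv₀, map_natCast]
  simp only [averageMap_eq_smul_sum, LinearMap.smul_apply, LinearMap.sum_apply, inner_smul_left,
    inner_smul_right, sum_inner, inner_sum, hρ, hc]
  congr 1
  exact Fintype.sum_equiv (Equiv.inv G) _ _ fun g => by simp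

theorem averageMap_eq_starProjection [FiniteDimensional 𝕜 E] (ρ : Representation 𝕜 G E)
    (hρ : ∀ g x y, inner 𝕜 (ρ g x) y = inner 𝕜 x (ρ g⁻¹ y)) :
    ρ.averageMap = ρ.invariants.starProjection.toLinearMap := by
  refine (ρ.isSymmetricProjection_averageMap hρ).ext
    (Submodule.isSymmetricProjection_starProjection _) ?_
  rw [ρ.isProj_averageMap.range, Submodule.range_starProjection]

end Unitary

end Representation

theorem LinearMap.IsSymmetricProjection.adjoint_comp_comp_self {𝕜 E F : Type*} [RCLike 𝕜]
    [NormedAddCommGroup E] [InnerProductSpace 𝕜 E] [FiniteDimensional 𝕜 E]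
    [NormedAddCommGroup F] [InnerProductSpace 𝕜 F] [FiniteDimensional 𝕜 F]
    {p : F →ₗ[𝕜] F} (hp : p.IsSymmetricProjection) (f : E →ₗ[𝕜] F) :
    adjoint (p ∘ₗ f) ∘ₗ (p ∘ₗ f) = adjoint f ∘ₗ p ∘ₗ f := by
  rw [adjoint_comp, hp.isSymmetric.adjoint_eq, comp_assoc, ← comp_assoc f p p,
    ← Module.End.mul_eq_comp, hp.isIdempotentElem.eq]

section Translation

variable {G V : Type*} [AddCommGroup G] [AddCommGroup V]

def translationRep (φ : G →+ V) :
    Representation ℂ (Multiplicative G) (EuclideanSpace ℂ V) where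
  toFun g :=
    { toFun ψ := WithLp.toLp 2 fun v => ψ (v + φ g.toAdd)
      map_add' _ _ := rfl
      map_smul' _ _ := rfl }
  map_one' := by ext ψ v; simp
  map_mul' g h := by
    ext ψ v
    change ψ (v + φ (g.toAdd + h.toAdd)) = ψ (v + φ g.toAdd + φ h.toAdd)
    rw [map_add, add_assoc]

theorem translationRep_apply (φ : G →+ V) (g : Multiplicative G) (ψ : EuclideanSpace ℂ V)
    (v : V) : translationRep φ g ψ v = ψ (v + φ g.toAdd) := rfl

theorem inner_translationRep_left [Fintype V] (φ : G →+ V) (g : Multiplicative G)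
    (x y : EuclideanSpace ℂ V) :
    inner ℂ (translationRep φ g x) y = inner ℂ x (translationRep φ g⁻¹ y) := by
  simp only [PiLp.inner_apply, translationRep_apply]
  exact Fintype.sum_equiv (Equiv.addRight (φ g.toAdd)) _ _ fun v => by simp

end Translation

namespace GaugingFractal

section Pair

variable {I J : Type*} [Fintype I] [DecidableEq I] [Fintype J] [DecidableEq J]
variable (A : J → Finset I)

def bndHom : (I → ZMod 2) →+ (J → ZMod 2) where
  toFun := bnd A
  map_zero' := by ext j; simp [bnd]
  map_add' p q := by ext j; simp [bnd, sum_add_distrib]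

def gaugeRep : Representation ℂ (Multiplicative (I → ZMod 2)) (HS2 I J) :=
  translationRep ((AddMonoidHom.id _).prod (bndHom A))

def symmRep : Representation ℂ (Multiplicative (bndHom A).ker) (HS I) :=
  translationRep (bndHom A).ker.subtype

theorem gaugeRep_apply (g : Multiplicative (I → ZMod 2)) (ψ : HS2 I J)
    (v : (I → ZMod 2) × (J → ZMod 2)) :
    gaugeRep A g ψ v = ψ (v + (g.toAdd, bnd A g.toAdd)) := rfl

-- `C A i` is, definitionally, `gaugeRep A` at the generator `ofAdd (chi i)`.
theorem Pproj_eq_smul_sum :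
    Pproj A = ((2 : ℂ) ^ Fintype.card I)⁻¹ • ∑ g, gaugeRep A g :=
  (gaugeRep A).noncommProd_half_one_add_eq_smul_sum _

theorem isSymmetricProjection_Pproj : (Pproj A).IsSymmetricProjection := by
  let _ : Invertible (Fintype.card (Multiplicative (I → ZMod 2)) : ℂ) :=
    invertibleOfNonzero (Nat.cast_ne_zero.2 Fintype.card_ne_zero)
  have h : Pproj A = (gaugeRep A).averageMap := by
    rw [Pproj_eq_smul_sum, Representation.averageMap_eq_smul_sum, invOf_eq_inv]
    simp
  exact h ▸ (gaugeRep A).isSymmetricProjection_averageMap (inner_translationRep_left _)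

theorem incl_apply (ψ : HS I) (ab : (I → ZMod 2) × (J → ZMod 2)) :
    (incl ψ : HS2 I J) ab = if ab.2 = 0 then ψ ab.1 else 0 := rfl

theorem res0_apply (ψ : HS2 I J) (a : I → ZMod 2) : res0 ψ a = ψ (a, 0) := rfl

theorem XOp_apply {K : Type*} [Fintype K] [DecidableEq K] (p : K → ZMod 2) (ψ : HS K)
    (a : K → ZMod 2) : XOp p ψ a = ψ (a + p) := rfl

theorem adjoint_incl : LinearMap.adjoint (incl : HS I →ₗ[ℂ] HS2 I J) = res0 := by
  refine ((LinearMap.eq_adjoint_iff _ _).2 fun x y => ?_).symm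
  simp [PiLp.inner_apply, Fintype.sum_prod_type, incl_apply, res0_apply]

theorem res0_gaugeRep_incl (g : Multiplicative (I → ZMod 2)) (ψ : HS I) :
    res0 (gaugeRep A g (incl ψ)) = if bnd A g.toAdd = 0 then XOp g.toAdd ψ else 0 := by
  ext a
  by_cases h : bnd A g.toAdd = 0 <;> simp [h, gaugeRep_apply, res0_apply, incl_apply, XOp_apply]

theorem res0_comp_Pproj_comp_incl :
    res0 ∘ₗ Pproj A ∘ₗ incl = ((2 : ℂ) ^ Fintype.card I)⁻¹ •
      ∑ s ∈ univ.filter (fun s : I → ZMod 2 => bnd A s = 0), XOp s := by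
  rw [Pproj_eq_smul_sum, LinearMap.smul_comp, LinearMap.comp_smul]
  congr 1
  ext ψ : 1
  simp only [LinearMap.comp_apply, LinearMap.sum_apply, map_sum, res0_gaugeRep_incl, sum_filter]
  exact Fintype.sum_equiv Multiplicative.toAdd _ _ fun _ => by split_ifs <;> rfl

theorem invariants_symmRep : (symmRep A).invariants = symmSub A := by
  ext ψ
  constructor
  · intro h s hs
    exact h (Multiplicative.ofAdd ⟨s, hs⟩)
  · intro h g
    exact h _ g.toAdd.2

theorem sum_symmRep :
    ∑ g, symmRep A g = ∑ s ∈ univ.filter (fun s : I → ZMod 2 => bnd A s = 0), XOp s := by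
  rw [sum_subtype _ (p := (· ∈ (bndHom A).ker)) (fun s => by simp [bndHom])]
  exact Fintype.sum_equiv Multiplicative.toAdd _ _ fun _ => rfl

theorem sum_XOp_eq_card_smul_starProjection :
    ∑ s ∈ univ.filter (fun s : I → ZMod 2 => bnd A s = 0), XOp s
      = (Nat.card {s : I → ZMod 2 // bnd A s = 0} : ℂ) •
          (symmSub A).starProjection.toLinearMap := by
  let _ : Invertible (Fintype.card (Multiplicative (bndHom A).ker) : ℂ) :=
    invertibleOfNonzero (Nat.cast_ne_zero.2 Fintype.card_ne_zero)
  have hcard : Nat.card {s : I → ZMod 2 // bnd A s = 0}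
      = Fintype.card (Multiplicative (bndHom A).ker) :=
    (Nat.card_congr (Multiplicative.ofAdd (α := (bndHom A).ker))).trans
      Fintype.card_eq_nat_card.symm
  rw [← invariants_symmRep, ← (symmRep A).averageMap_eq_starProjection
    (inner_translationRep_left _), Representation.averageMap_eq_smul_sum, smul_smul, hcard,
    mul_invOf_self, one_smul, sum_symmRep]

/-- `G†G = 2^{−|I|} Σ_{s ∈ S} X(s)`, and consequently
`G†G = (|S| / 2^{|I|}) · Π` with `Π` the orthogonal projection onto the symmetric subspace. -/
theorem Gmap_adjoint_comp (A : J → Finset I) :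
    LinearMap.adjoint (Gmap A) ∘ₗ Gmap A
      = ((2 : ℂ) ^ Fintype.card I)⁻¹ •
          ∑ s ∈ Finset.univ.filter (fun s : I → ZMod 2 => bnd A s = 0), XOp s
    ∧ LinearMap.adjoint (Gmap A) ∘ₗ Gmap A
      = ((Nat.card {s : I → ZMod 2 // bnd A s = 0} : ℂ) / 2 ^ Fintype.card I) •
          ((symmSub A).subtype ∘ₗ (symmSub A).orthogonalProjectionOnto.toLinearMap) := by
  have hGG : LinearMap.adjoint (Gmap A) ∘ₗ Gmap A = ((2 : ℂ) ^ Fintype.card I)⁻¹ •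
      ∑ s ∈ univ.filter (fun s : I → ZMod 2 => bnd A s = 0), XOp s := by
    rw [Gmap, (isSymmetricProjection_Pproj A).adjoint_comp_comp_self, adjoint_incl,
      res0_comp_Pproj_comp_incl]
  refine ⟨hGG, ?_⟩
  rw [hGG, sum_XOp_eq_card_smul_starProjection, smul_smul, div_eq_mul_inv, mul_comm]
  rfl

end Pair

end GaugingFractal
end
end

section
/- The kernel of the gauging map of the two-dimensional Ising model is generated by the toric-code plaquette term: in the Laurent polynomial ring R over F₂ in two variables x, y, the kernel of the R-linear map R² → R given by (f, g) ↦ (1 + y)·f + (1 + x)·g equals the image of the R-linear map R → R² given by h ↦ ((1 + x)·h, (1 + y)·h); that is, (1+y)f + (1+x)g = 0 holds if and only if there exists h ∈ R with f = (1+x)h and g = (1+y)h. -/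
/-!
The substitution `x ↦ 1`, i.e. the map `k[ℤ × H] → k[H]` induced by the projection, has kernel
`(x - 1)`: modulo `x - 1` every monomial `xⁿ yᵐ` equals `yᵐ`.
If `(y - 1) f = (x - 1) g` over a domain `k`, applying `x ↦ 1` gives `(y - 1) f(1, y) = 0` in the
domain `k[ℤ]`, so `x - 1 ∣ f`; cancelling `x - 1` then yields `g = (y - 1) h`. Over `F₂` the
signs disappear and `(1 + y) f + (1 + x) g = 0` is the same equation.
-/

noncomputable section

namespace UngaugingCubicCode

/-- The ring of Laurent polynomials over `F₂` in two invertible variables: the group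
algebra of `ℤ²` over `ZMod 2`. -/
abbrev R2 : Type := AddMonoidAlgebra (ZMod 2) (ℤ × ℤ)

/-- The variable `x = monomial (1,0)`. -/
def xvar : R2 := AddMonoidAlgebra.single ((1, 0) : ℤ × ℤ) 1

/-- The variable `y = monomial (0,1)`. -/
def yvar : R2 := AddMonoidAlgebra.single ((0, 1) : ℤ × ℤ) 1

/-- The gauging map `η` of the 2D Ising model: `(f, g) ↦ (1+y)·f + (1+x)·g`. -/
def etaMap : (R2 × R2) →ₗ[R2] R2 :=
  (LinearMap.mulLeft R2 (1 + yvar)).coprod (LinearMap.mulLeft R2 (1 + xvar))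

/-- The toric-code plaquette map `σ_Z`: `h ↦ ((1+x)·h, (1+y)·h)`. -/
def sigmaZMap : R2 →ₗ[R2] (R2 × R2) :=
  (LinearMap.mulLeft R2 (1 + xvar)).prod (LinearMap.mulLeft R2 (1 + yvar))

open AddMonoidAlgebra

section
variable {k H : Type*} [CommRing k] [AddCommMonoid H]

theorem sub_one_dvd_of_mapDomainRingHom_snd_eq_zero {a : k[ℤ × H]}
    (ha : mapDomainRingHom k (AddMonoidHom.snd ℤ H) a = 0) :
    single ((1, 0) : ℤ × H) (1 : k) - 1 ∣ a := by
  let I : Ideal k[ℤ × H] := Ideal.span {single (1, 0) (1 : k) - 1}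
  let π := Ideal.Quotient.mk I
  have hx : π (single (1, 0) 1) = 1 := by
    rw [← sub_eq_zero, ← map_one π, ← map_sub, Ideal.Quotient.eq_zero_iff_mem]
    exact Ideal.mem_span_singleton_self _
  have hpow (n : ℤ) : π (single (n, 0) 1) = 1 := by
    let χ : Multiplicative ℤ →* k[ℤ × H] ⧸ I := π.toMonoidHom.comp
      ((of k (ℤ × H)).comp (AddMonoidHom.toMultiplicative (AddMonoidHom.inl ℤ H)))
    exact DFunLike.congr_fun (MonoidHom.ext_mint (f := χ) (g := 1) hx) (Multiplicative.ofAdd n)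
  have hfactor : π.comp ((mapDomainRingHom k (AddMonoidHom.inr ℤ H)).comp
      (mapDomainRingHom k (AddMonoidHom.snd ℤ H))) = π := by
    refine ringHom_ext (fun r => ?_) (fun ⟨n, h⟩ => ?_) <;>
      simp only [RingHom.coe_comp, Function.comp_apply, mapDomainRingHom_apply,
        AddMonoidHom.coe_snd, mapDomain_single, AddMonoidHom.inr_apply]
    · rfl
    · have hsplit : single (n, h) (1 : k) = single (n, 0) 1 * single (0, h) 1 := by
        simp [single_mul_single]
      rw [hsplit, map_mul, hpow, one_mul]
  rw [← Ideal.mem_span_singleton, ← Ideal.Quotient.eq_zero_iff_mem (I := I)]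
  show π a = 0
  rw [← hfactor, RingHom.comp_apply, RingHom.comp_apply, ha, map_zero, map_zero]

end

section
variable {k : Type*} [CommRing k]

theorem single_one_sub_one_ne_zero [Nontrivial k] {G : Type*} [AddMonoid G] {g : G}
    (hg : g ≠ 0) : single g (1 : k) - 1 ≠ 0 :=
  sub_ne_zero.2 fun h => hg (single_left_injective one_ne_zero (h.trans one_def))

theorem sub_one_mul_eq_sub_one_mul_iff [IsDomain k] (f g : k[ℤ × ℤ]) :
    (single (0, 1) 1 - 1) * f = (single (1, 0) 1 - 1) * g ↔
      ∃ h, f = (single (1, 0) 1 - 1) * h ∧ g = (single (0, 1) 1 - 1) * h := by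
  constructor
  · intro hfg
    let φ := mapDomainRingHom k (AddMonoidHom.snd ℤ ℤ)
    have hφ (m : ℤ × ℤ) : φ (single m 1) = single m.2 1 := mapDomain_single
    have hφf : φ f = 0 := by
      have : φ (single (0, 1) 1 - 1) * φ f = 0 := by
        rw [← map_mul, hfg, map_mul, map_sub, map_one, hφ, ← one_def, sub_self, zero_mul]
      refine (mul_eq_zero.1 this).resolve_left ?_
      rw [map_sub, map_one, hφ]
      exact single_one_sub_one_ne_zero one_ne_zero
    obtain ⟨h, rfl⟩ := sub_one_dvd_of_mapDomainRingHom_snd_eq_zero hφf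
    have hx : single ((1, 0) : ℤ × ℤ) (1 : k) - 1 ≠ 0 := single_one_sub_one_ne_zero (by simp)
    refine ⟨h, rfl, mul_left_cancel₀ hx ?_⟩
    rw [← hfg]
    ring
  · rintro ⟨h, rfl, rfl⟩
    ring

end

instance : CharP R2 2 := charP_of_injective_algebraMap' (ZMod 2) 2

theorem one_add_single_eq_single_sub_one (m : ℤ × ℤ) :
    (1 : R2) + single m 1 = single m 1 - 1 := by
  rw [CharTwo.sub_eq_add, add_comm]

/-- The kernel of the gauging map of the two-dimensional Ising model is
generated by the toric-code plaquette term: `ker η = im σ_Z`; that is,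
`(1+y)f + (1+x)g = 0` iff there is `h` with `f = (1+x)h` and `g = (1+y)h`. -/
theorem ising_gauging_kernel :
    LinearMap.ker etaMap = LinearMap.range sigmaZMap
    ∧ ∀ f g : R2,
        (1 + yvar) * f + (1 + xvar) * g = 0
          ↔ ∃ h : R2, f = (1 + xvar) * h ∧ g = (1 + yvar) * h := by
  have key (f g : R2) : (1 + yvar) * f + (1 + xvar) * g = 0
      ↔ ∃ h : R2, f = (1 + xvar) * h ∧ g = (1 + yvar) * h := by
    rw [CharTwo.add_eq_zero, xvar, yvar, one_add_single_eq_single_sub_one,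
      one_add_single_eq_single_sub_one]
    exact sub_one_mul_eq_sub_one_mul_iff f g
  refine ⟨?_, key⟩
  ext ⟨f, g⟩
  simp [etaMap, sigmaZMap, key, eq_comm]

end UngaugingCubicCode
end
end
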